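/- Let F be a field and let c, d ∈ F. Define φ̂(u₁,u₂) = ((c + d(u₁+1)u₂)/u₁, (c + d·u₂)/(u₁u₂)) and ψ̂(u₁,u₂) = (ū₁, ū₂) with ū₁ = (d·u₂+c)(u₂+d)/(u₁u₂), ū₂ = (ū₁+c)/(u₂(ū₁+1)). Then for every point (u₁,u₂) with nonzero coordinates at which every denominator occurring in the compositions ψ̂∘φ̂ and φ̂∘ψ̂ is nonzero, the two maps commute: ψ̂(φ̂(u₁,u₂)) = φ̂(ψ̂(u₁,u₂)). -/

import Mathlib

/-- The deformed A₃ map `φ̂(u₁,u₂) = ((c + d(u₁+1)u₂)/u₁, (c + d·u₂)/(u₁u₂))`. -/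
noncomputable def phiHat {F : Type*} [Field F] (c d : F) (u : F × F) : F × F :=
  ((c + d * (u.1 + 1) * u.2) / u.1, (c + d * u.2) / (u.1 * u.2))

/-- The QRT map `ψ̂(u₁,u₂) = (ū₁, ū₂)` with `ū₁ = (d·u₂+c)(u₂+d)/(u₁u₂)` and
`ū₂ = (ū₁+c)/(u₂(ū₁+1))`. -/
noncomputable def psiHat {F : Type*} [Field F] (c d : F) (u : F × F) : F × F :=
  ((d * u.2 + c) * (u.2 + d) / (u.1 * u.2),
    ((d * u.2 + c) * (u.2 + d) / (u.1 * u.2) + c) /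
      (u.2 * ((d * u.2 + c) * (u.2 + d) / (u.1 * u.2) + 1)))

/-!
Both composites equal the explicit point `phiHatPsiHat`, whose first coordinate is
`d/u₂ + c·u₁/(c + d·u₂)`. For the first coordinates the key cancellation is `φ̂₂ + d = φ̂₁/u₂`.
The second coordinates then agree because each map determines its second coordinate from its
first: `ψ̂₂ · u₂(ψ̂₁ + 1) = ψ̂₁ + c` and `φ̂₂ · (u₁ + 1)u₂ = φ̂₁ + c`.
-/

section

variable {F : Type*} [Field F] {c d : F} {u : F × F}

variable (c d) in
noncomputable def phiHatPsiHat (u : F × F) : F × F :=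
  let r := d / u.2 + c * u.1 / (c + d * u.2)
  (r, u.1 * u.2 * (r + c) / ((c + d * u.2) * (r + 1)))

variable (c d u) in
theorem psiHat_snd :
    (psiHat c d u).2 = ((psiHat c d u).1 + c) / (u.2 * ((psiHat c d u).1 + 1)) := rfl

theorem phiHat_snd_add (h₁ : u.1 ≠ 0) (h₂ : u.2 ≠ 0) :
    (phiHat c d u).2 + d = (phiHat c d u).1 / u.2 := by
  simp only [phiHat]
  field_simp
  ring

theorem phiHat_snd_mul (h₁ : u.1 ≠ 0) (h₂ : u.2 ≠ 0) :
    (phiHat c d u).2 * ((u.1 + 1) * u.2) = (phiHat c d u).1 + c := by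
  simp only [phiHat]
  field_simp
  ring

theorem psiHat_phiHat (hA : (phiHat c d u).1 ≠ 0) (hB : (phiHat c d u).2 ≠ 0) :
    psiHat c d (phiHat c d u) = phiHatPsiHat c d u := by
  obtain ⟨-, hx⟩ := div_ne_zero_iff.mp hA
  obtain ⟨hs, hxy⟩ := div_ne_zero_iff.mp hB
  have hy : u.2 ≠ 0 := right_ne_zero_of_mul hxy
  set B := (phiHat c d u).2 with hB_eq
  have hfst : (psiHat c d (phiHat c d u)).1 = d / u.2 + c * u.1 / (c + d * u.2) := calc
    (psiHat c d (phiHat c d u)).1 = (d * B + c) * (B + d) / ((phiHat c d u).1 * B) := rfl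
    _ = (d * B + c) / (u.2 * B) := by rw [phiHat_snd_add hx hy]; field_simp
    _ = d / u.2 + c * u.1 / (c + d * u.2) := by simp only [hB_eq, phiHat]; field_simp
  refine Prod.ext hfst ?_
  rw [psiHat_snd, hfst]
  simp only [phiHat, phiHatPsiHat]
  rw [div_mul_eq_mul_div, div_div_eq_mul_div]
  ring

theorem phiHat_psiHat (hP : (psiHat c d u).1 ≠ 0) (hQ : (psiHat c d u).2 ≠ 0) :
    phiHat c d (psiHat c d u) = phiHatPsiHat c d u := by
  obtain ⟨hsd, hxy⟩ := div_ne_zero_iff.mp hP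
  obtain ⟨hdc, hyd⟩ := mul_ne_zero_iff.mp hsd
  have hs : c + d * u.2 ≠ 0 := by rwa [add_comm]
  have hx : u.1 ≠ 0 := left_ne_zero_of_mul hxy
  have hy : u.2 ≠ 0 := right_ne_zero_of_mul hxy
  have hP1 : (psiHat c d u).1 + 1 ≠ 0 :=
    right_ne_zero_of_mul (div_ne_zero_iff.mp (psiHat_snd c d u ▸ hQ)).2
  set P := (psiHat c d u).1 with hP_eq
  set Q := (psiHat c d u).2 with hQ_eq
  have hPQ : (P + 1) * Q = (P + c) / u.2 := by
    rw [hQ_eq, psiHat_snd, ← hP_eq]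
    field_simp
  have hfst : (phiHat c d (P, Q)).1 = d / u.2 + c * u.1 / (c + d * u.2) := calc
    (phiHat c d (P, Q)).1 = (c + d * ((P + 1) * Q)) / P := by simp only [phiHat, mul_assoc]
    _ = (c + d * ((P + c) / u.2)) / P := by rw [hPQ]
    _ = d / u.2 + c * u.1 / (c + d * u.2) := by simp only [hP_eq, psiHat]; field_simp; ring
  refine Prod.ext hfst ?_
  set R := d / u.2 + c * u.1 / (c + d * u.2) with hR_eq
  have hPc_eq : (P + c) / u.2 = (c + d * u.2) * (R + 1) / (u.1 * u.2) := by
    simp only [hP_eq, hR_eq, psiHat]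
    field_simp
    ring
  calc (phiHat c d (P, Q)).2 = (R + c) / ((P + 1) * Q) := by
        rw [← hfst, ← phiHat_snd_mul hP hQ, mul_div_cancel_right₀ _ (mul_ne_zero hP1 hQ)]
    _ = u.1 * u.2 * (R + c) / ((c + d * u.2) * (R + 1)) := by
        rw [hPQ, hPc_eq, div_div_eq_mul_div]
        ring

end

theorem deformed_a3_commutes_with_qrt {F : Type*} [Field F] (c d u₁ u₂ : F)
    -- denominators for ψ̂ ∘ φ̂:
    (hA : (phiHat c d (u₁, u₂)).1 ≠ 0)
    (hB : (phiHat c d (u₁, u₂)).2 ≠ 0)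
    -- denominators for φ̂ ∘ ψ̂:
    (hP : (psiHat c d (u₁, u₂)).1 ≠ 0)
    (hQ : (psiHat c d (u₁, u₂)).2 ≠ 0) :
    psiHat c d (phiHat c d (u₁, u₂)) = phiHat c d (psiHat c d (u₁, u₂)) :=
  (psiHat_phiHat hA hB).trans (phiHat_psiHat hP hQ).symm
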